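/- arXiv:2404.12826 — 2 statements merged into one kernel-verified Lean document; each statement's English description precedes it below -/
import Mathlib

section
/- Let (P,Q) be a quasi-projection pair of bounded linear operators on a complex Hilbert space H, and set T₂ = (I−P)Q and H₄ = ker(P) ∩ ker(Q). Then I − P equals the orthogonal projection onto the closure of ran(T₂) plus the orthogonal projection onto H₄, and the orthogonal projection onto ker(Q) equals the orthogonal projection onto the closure of ran((I−Q)P) plus the orthogonal projection onto H₄. -/
set_option linter.unusedSectionVars false

noncomputable section

open ContinuousLinearMap

variable {H : Type*} [NormedAddCommGroup H] [InnerProductSpace ℂ H] [CompleteSpace H]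

/-- The orthogonal projection onto a closed subspace `K` of `H`, regarded as a bounded
operator on `H`. -/
def projOn (K : Submodule ℂ H) (hK : IsClosed (K : Set H)) : H →L[ℂ] H :=
  haveI : CompleteSpace K := hK.completeSpace_coe
  K.subtypeL ∘L K.orthogonalProjectionOnto

theorem range_eq_ker_of_idem (T : H →L[ℂ] H) (h : T * T = T) :
    LinearMap.range (T : H →ₗ[ℂ] H) = LinearMap.ker ((1 - T : H →L[ℂ] H) : H →ₗ[ℂ] H) := by
  ext x
  constructor
  · rintro ⟨y, rfl⟩
    have hy : T (T y) = T y := congrFun (congrArg DFunLike.coe h) y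
    simp [LinearMap.mem_ker, hy]
  · intro hx
    have hx' : x - T x = 0 := by
      have := LinearMap.mem_ker.mp hx
      simpa using this
    exact ⟨x, (sub_eq_zero.mp hx').symm⟩

theorem isClosed_range_of_idem (T : H →L[ℂ] H) (h : T * T = T) :
    IsClosed ((LinearMap.range (T : H →ₗ[ℂ] H) : Submodule ℂ H) : Set H) := by
  rw [range_eq_ker_of_idem T h]
  exact ContinuousLinearMap.isClosed_ker _

theorem isClosed_inf {K L : Submodule ℂ H} (hK : IsClosed (K : Set H))
    (hL : IsClosed (L : Set H)) : IsClosed ((K ⊓ L : Submodule ℂ H) : Set H) := by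
  rw [Submodule.coe_inf]
  exact hK.inter hL

/-- The orthogonal projection onto the closure of the range of an operator. -/
def projCl (T : H →L[ℂ] H) : H →L[ℂ] H :=
  projOn (LinearMap.range (T : H →ₗ[ℂ] H)).topologicalClosure
    (Submodule.isClosed_topologicalClosure _)

open scoped InnerProductSpace

lemma projOn_apply' (K : Submodule ℂ H) (hK : IsClosed (K : Set H)) (x : H) :
    haveI : CompleteSpace K := hK.completeSpace_coe
    projOn K hK x = (K.orthogonalProjectionOnto x : H) := rfl

lemma projOn_mem (K : Submodule ℂ H) (hK : IsClosed (K : Set H)) (x : H) :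
    projOn K hK x ∈ K := by
  haveI : CompleteSpace K := hK.completeSpace_coe
  rw [projOn_apply']
  exact Submodule.coe_mem _

lemma projOn_eq_of (K : Submodule ℂ H) (hK : IsClosed (K : Set H)) {x v : H} (hv : v ∈ K)
    (ho : ∀ w ∈ K, ⟪x - v, w⟫_ℂ = 0) : projOn K hK x = v := by
  haveI : CompleteSpace K := hK.completeSpace_coe
  rw [projOn_apply']
  exact K.eq_starProjection_of_mem_of_inner_eq_zero hv ho

lemma projOn_inner_eq_zero (K : Submodule ℂ H) (hK : IsClosed (K : Set H)) (x : H) :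
    ∀ w ∈ K, ⟪x - projOn K hK x, w⟫_ℂ = 0 := by
  haveI : CompleteSpace K := hK.completeSpace_coe
  rw [projOn_apply']
  exact fun w hw => K.starProjection_inner_eq_zero x w hw

/-- Orthogonality to the closure of the range of `T` from vanishing of the adjoint. -/
lemma inner_eq_zero_of_adjoint_apply_eq_zero (T : H →L[ℂ] H) {n : H}
    (hn : ContinuousLinearMap.adjoint T n = 0) {m : H}
    (hm : m ∈ (LinearMap.range (T : H →ₗ[ℂ] H)).topologicalClosure) : ⟪m, n⟫_ℂ = 0 := by
  have hsub : (LinearMap.range (T : H →ₗ[ℂ] H)).topologicalClosure ≤ LinearMap.ker (innerSL ℂ n : H →ₗ[ℂ] ℂ) := by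
    apply Submodule.topologicalClosure_minimal
    · rintro _ ⟨x, rfl⟩
      have : ⟪n, T x⟫_ℂ = ⟪ContinuousLinearMap.adjoint T n, x⟫_ℂ :=
        (ContinuousLinearMap.adjoint_inner_left T x n).symm
      simpa [LinearMap.mem_ker, hn] using this
    · exact ContinuousLinearMap.isClosed_ker _
  have h0 : ⟪n, m⟫_ℂ = 0 := hsub hm
  rw [inner_eq_zero_symm]
  exact h0

/-- If `y` is orthogonal to the closure of the range of `T`, then `T† y = 0`. -/
lemma adjoint_apply_eq_zero_of_inner (T : H →L[ℂ] H) {y : H}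
    (hy : ∀ m ∈ (LinearMap.range (T : H →ₗ[ℂ] H)).topologicalClosure, ⟪y - (0:H), m⟫_ℂ = 0) :
    ContinuousLinearMap.adjoint T y = 0 := by
  have key : ∀ x : H, ⟪ContinuousLinearMap.adjoint T y, x⟫_ℂ = 0 := by
    intro x
    rw [ContinuousLinearMap.adjoint_inner_left]
    have := hy (T x) (Submodule.le_topologicalClosure _ ⟨x, rfl⟩)
    simpa using this
  have := key (ContinuousLinearMap.adjoint T y)
  rwa [inner_self_eq_zero] at this

/-- Sum decomposition of a projection onto `K` as projections onto orthogonal pieces. -/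
lemma projOn_add_eq (M N K : Submodule ℂ H) (hM : IsClosed (M : Set H))
    (hN : IsClosed (N : Set H)) (hK : IsClosed (K : Set H))
    (hMK : M ≤ K) (hNK : N ≤ K)
    (hMN : ∀ m ∈ M, ∀ n ∈ N, ⟪m, n⟫_ℂ = 0)
    (hdec : ∀ k ∈ K, k - projOn M hM k ∈ N) :
    projOn K hK = projOn M hM + projOn N hN := by
  ext x
  rw [ContinuousLinearMap.add_apply]
  apply projOn_eq_of
  · exact K.add_mem (hMK (projOn_mem M hM x)) (hNK (projOn_mem N hN x))
  · intro w hw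
    have hm : projOn M hM w ∈ M := projOn_mem M hM w
    have hn : w - projOn M hM w ∈ N := hdec w hw
    have hxm : projOn M hM x ∈ M := projOn_mem M hM x
    have hxn : projOn N hN x ∈ N := projOn_mem N hN x
    set m := projOn M hM w with hmdef
    set nn := w - projOn M hM w with hnndef
    have e : w = m + nn := by rw [hnndef]; abel
    have h1 : ⟪x - projOn M hM x, m⟫_ℂ = 0 :=
      projOn_inner_eq_zero M hM x m hm
    have h2 : ⟪projOn N hN x, m⟫_ℂ = 0 := by
      rw [inner_eq_zero_symm]; exact hMN _ hm _ hxn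
    have h3 : ⟪x - projOn N hN x, nn⟫_ℂ = 0 :=
      projOn_inner_eq_zero N hN x nn hn
    have h4 : ⟪projOn M hM x, nn⟫_ℂ = 0 := hMN _ hxm _ hn
    have ea : x - (projOn M hM x + projOn N hN x)
        = (x - projOn M hM x) - projOn N hN x := by abel
    rw [ea, e, inner_sub_left, inner_add_right, inner_add_right]
    have h5 : ⟪x - projOn M hM x, nn⟫_ℂ - ⟪projOn N hN x, nn⟫_ℂ
        = ⟪x - projOn N hN x, nn⟫_ℂ - ⟪projOn M hM x, nn⟫_ℂ := by
      rw [← inner_sub_left, ← inner_sub_left]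
      congr 1
      abel
    linear_combination h1 - h2 + h5 + h3 - h4

lemma adjoint_one' : ContinuousLinearMap.adjoint (1 : H →L[ℂ] H) = 1 := by
  rw [ContinuousLinearMap.one_def, ContinuousLinearMap.adjoint_id]

lemma projOn_ker_of_sa_idem (P : H →L[ℂ] H)
    (hPsa : ContinuousLinearMap.adjoint P = P) (hP : P * P = P) :
    projOn (LinearMap.ker (P : H →ₗ[ℂ] H)) (ContinuousLinearMap.isClosed_ker P) = 1 - P := by
  ext x
  apply projOn_eq_of
  · have : P ((1 - P) x) = 0 := by
      have := congrFun (congrArg DFunLike.coe hP) x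
      simp only [ContinuousLinearMap.mul_apply] at this
      simp [this, map_sub]
    exact LinearMap.mem_ker.mpr this
  · intro w hw
    have hw0 : P w = 0 := hw
    have : x - (1 - P) x = P x := by simp
    rw [this, ← hPsa, ContinuousLinearMap.adjoint_inner_left, hw0, inner_zero_right]

/-- For a quasi-projection pair `(P, Q)`:
`I - P = P_{cl ran((I-P)Q)} + P_{H₄}` and `P_{ker Q} = P_{cl ran((I-Q)P)} + P_{H₄}`,
where `H₄ = ker P ⊓ ker Q`. -/
theorem quasiProjectionPair_proj_decomp_I_sub_P (P Q : H →L[ℂ] H)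
    (hPsa : ContinuousLinearMap.adjoint P = P) (hP : P * P = P) (hQ : Q * Q = Q)
    (hPQ : ContinuousLinearMap.adjoint Q = (2 * P - 1) * Q * (2 * P - 1)) :
    1 - P = projCl ((1 - P) * Q)
        + projOn (LinearMap.ker (P : H →ₗ[ℂ] H) ⊓ LinearMap.ker (Q : H →ₗ[ℂ] H))
            (isClosed_inf (ContinuousLinearMap.isClosed_ker P)
              (ContinuousLinearMap.isClosed_ker Q)) ∧
    projOn (LinearMap.ker (Q : H →ₗ[ℂ] H)) (ContinuousLinearMap.isClosed_ker Q)
      = projCl ((1 - Q) * P)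
        + projOn (LinearMap.ker (P : H →ₗ[ℂ] H) ⊓ LinearMap.ker (Q : H →ₗ[ℂ] H))
            (isClosed_inf (ContinuousLinearMap.isClosed_ker P)
              (ContinuousLinearMap.isClosed_ker Q)) := by
  set J : H →L[ℂ] H := 2 * P - 1 with hJdef
  have h2P : (2 : H →L[ℂ] H) * P = P + P := by noncomm_ring
  have hJptw : ∀ x, J x = P x + P x - x := by
    intro x
    simp [hJdef, h2P]
  have hQQsa : ContinuousLinearMap.adjoint Q = J * Q * J := by rw [hPQ, hJdef]
  have hPapp : ∀ x, P (P x) = P x := fun x => by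
    have := congrFun (congrArg DFunLike.coe hP) x; simpa using this
  have hQapp : ∀ x, Q (Q x) = Q x := fun x => by
    have := congrFun (congrArg DFunLike.coe hQ) x; simpa using this
  have hQadj : ∀ x, ContinuousLinearMap.adjoint Q x = J (Q (J x)) := fun x => by
    have := congrFun (congrArg DFunLike.coe hQQsa) x; simpa using this
  have hJker : ∀ x, P x = 0 → J x = -x := by
    intro x hx; rw [hJptw, hx]; abel
  have hJran : ∀ x, P x = x → J x = x := by
    intro x hx; rw [hJptw, hx]; abel
  have hPJ : ∀ x, P (J x) = P x := by
    intro x; rw [hJptw]; simp [map_sub, hPapp]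
  have hJinj : ∀ x, J x = 0 → x = 0 := by
    intro x hx
    have : J (J x) = x := by rw [hJptw (J x), hJptw x]; simp [map_sub, hPapp]
    rw [hx, map_zero] at this; exact this.symm
  have hQadjH4 : ∀ n, P n = 0 → Q n = 0 → ContinuousLinearMap.adjoint Q n = 0 := by
    intro n hPn hQn
    rw [hQadj, hJker n hPn, map_neg, hQn]
    simp
  set N := LinearMap.ker (P : H →ₗ[ℂ] H) ⊓ LinearMap.ker (Q : H →ₗ[ℂ] H) with hNdef
  have hNclosed := isClosed_inf (ContinuousLinearMap.isClosed_ker P)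
      (ContinuousLinearMap.isClosed_ker Q)
  have hT1adj : ∀ y, ContinuousLinearMap.adjoint ((1 - P) * Q) y
      = ContinuousLinearMap.adjoint Q (y - P y) := by
    intro y
    rw [ContinuousLinearMap.mul_def, ContinuousLinearMap.adjoint_comp]
    simp [map_sub, hPsa, adjoint_one']
  have hT2adj : ∀ y, ContinuousLinearMap.adjoint ((1 - Q) * P) y
      = P (y - ContinuousLinearMap.adjoint Q y) := by
    intro y
    rw [ContinuousLinearMap.mul_def, ContinuousLinearMap.adjoint_comp]
    simp [map_sub, hPsa, adjoint_one']
  have hT1H4 : ∀ n ∈ N, ContinuousLinearMap.adjoint ((1 - P) * Q) n = 0 := by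
    rintro n ⟨hn1, hn2⟩
    have hPn : P n = 0 := hn1
    have hQn : Q n = 0 := hn2
    rw [hT1adj, hPn, sub_zero, hQadjH4 n hPn hQn]
  have hT2H4 : ∀ n ∈ N, ContinuousLinearMap.adjoint ((1 - Q) * P) n = 0 := by
    rintro n ⟨hn1, hn2⟩
    have hPn : P n = 0 := hn1
    have hQn : Q n = 0 := hn2
    rw [hT2adj, hQadjH4 n hPn hQn, sub_zero, hPn]
  constructor
  · set M := (LinearMap.range (((1 - P) * Q : H →L[ℂ] H) : H →ₗ[ℂ] H)).topologicalClosure with hMdef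
    have hMclosed : IsClosed (M : Set H) := Submodule.isClosed_topologicalClosure _
    have hMK : M ≤ LinearMap.ker (P : H →ₗ[ℂ] H) := by
      apply Submodule.topologicalClosure_minimal
      · rintro _ ⟨x, rfl⟩
        simp only [LinearMap.mem_ker, ContinuousLinearMap.coe_coe, ContinuousLinearMap.mul_apply,
          ContinuousLinearMap.sub_apply, ContinuousLinearMap.one_apply, map_sub, hPapp]
        abel
      · exact ContinuousLinearMap.isClosed_ker P
    have hsum : projOn (LinearMap.ker (P : H →ₗ[ℂ] H)) (ContinuousLinearMap.isClosed_ker P)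
        = projOn M hMclosed + projOn N hNclosed := by
      apply projOn_add_eq
      · exact hMK
      · exact inf_le_left
      · intro m hm n hn
        exact inner_eq_zero_of_adjoint_apply_eq_zero _ (hT1H4 n hn) hm
      · intro k hk
        set y := k - projOn M hMclosed k with hydef
        have hyP : P y = 0 := by
          have h1 : P k = 0 := hk
          have h2 : P (projOn M hMclosed k) = 0 := hMK (projOn_mem M hMclosed k)
          simp [hydef, map_sub, h1, h2]
        have hyadj : ContinuousLinearMap.adjoint ((1 - P) * Q) y = 0 := by
          apply adjoint_apply_eq_zero_of_inner
          intro m hm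
          rw [sub_zero]
          exact projOn_inner_eq_zero M hMclosed k m hm
        have hQy : Q y = 0 := by
          rw [hT1adj, hyP, sub_zero, hQadj, hJker y hyP, map_neg, map_neg,
            neg_eq_zero] at hyadj
          exact hJinj _ hyadj
        exact ⟨hyP, hQy⟩
    have hfin : (1 : H →L[ℂ] H) - P = projOn M hMclosed + projOn N hNclosed := by
      rw [← projOn_ker_of_sa_idem P hPsa hP]; exact hsum
    exact hfin
  · set M := (LinearMap.range (((1 - Q) * P : H →L[ℂ] H) : H →ₗ[ℂ] H)).topologicalClosure with hMdef
    have hMclosed : IsClosed (M : Set H) := Submodule.isClosed_topologicalClosure _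
    have hMK : M ≤ LinearMap.ker (Q : H →ₗ[ℂ] H) := by
      apply Submodule.topologicalClosure_minimal
      · rintro _ ⟨x, rfl⟩
        simp only [LinearMap.mem_ker, ContinuousLinearMap.coe_coe, ContinuousLinearMap.mul_apply,
          ContinuousLinearMap.sub_apply, ContinuousLinearMap.one_apply, map_sub, hQapp]
        abel
      · exact ContinuousLinearMap.isClosed_ker Q
    have hsum : projOn (LinearMap.ker (Q : H →ₗ[ℂ] H)) (ContinuousLinearMap.isClosed_ker Q)
        = projOn M hMclosed + projOn N hNclosed := by
      apply projOn_add_eq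
      · exact hMK
      · exact inf_le_right
      · intro m hm n hn
        exact inner_eq_zero_of_adjoint_apply_eq_zero _ (hT2H4 n hn) hm
      · intro k hk
        set y := k - projOn M hMclosed k with hydef
        have hyQ : Q y = 0 := by
          have h1 : Q k = 0 := hk
          have h2 : Q (projOn M hMclosed k) = 0 := hMK (projOn_mem M hMclosed k)
          simp [hydef, map_sub, h1, h2]
        have hyadj : ContinuousLinearMap.adjoint ((1 - Q) * P) y = 0 := by
          apply adjoint_apply_eq_zero_of_inner
          intro m hm
          rw [sub_zero]
          exact projOn_inner_eq_zero M hMclosed k m hm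
        have hkey : P y = P (ContinuousLinearMap.adjoint Q y) := by
          rw [hT2adj, map_sub, sub_eq_zero] at hyadj
          exact hyadj
        set z := P y with hzdef
        have hPz : P z = z := hPapp y
        have hz2 : z = P (Q z) + P (Q z) := by
          have hJy : J y = z + z - y := hJptw y
          have e1 : z = P (J (Q (J y))) := by
            rw [hkey, hQadj]
          rw [hJy, map_sub, map_add, hyQ, sub_zero, hPJ, map_add] at e1
          exact e1
        have hQaz : ContinuousLinearMap.adjoint Q z = z - Q z := by
          rw [hQadj, hJran z hPz, hJptw, ← hz2]
        have hQQaz : Q (ContinuousLinearMap.adjoint Q z) = 0 := by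
          rw [hQaz, map_sub, hQapp, sub_self]
        have hQaz0 : ContinuousLinearMap.adjoint Q z = 0 := by
          have h0 : ⟪ContinuousLinearMap.adjoint Q z,
              ContinuousLinearMap.adjoint Q z⟫_ℂ = 0 := by
            rw [ContinuousLinearMap.adjoint_inner_left, hQQaz, inner_zero_right]
          rwa [inner_self_eq_zero] at h0
        have hQzz : Q z = z := by
          rw [hQaz0] at hQaz
          have := hQaz.symm
          rwa [sub_eq_zero, eq_comm] at this
        have hz0 : z = 0 := by
          have h := hz2
          rw [hQzz, hPz] at h
          have : z + z = z := h.symm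
          exact add_eq_right.mp this
        exact ⟨hz0, hyQ⟩
    exact hsum
end
end

section
/- Let (P,Q) be a quasi-projection pair of bounded linear operators on a complex Hilbert space H. Set T₁ = P(I−Q), H₁ = ran(P) ∩ ran(Q), H₂ = ran(P) ∩ ker(Q), and H₅ = the closure of ran(PQ(I−P)). Then the orthogonal projection onto the closure of ran(PQ) equals P_{H₁} + P_{H₅}; P equals the orthogonal projection onto the closure of ran(PQ) plus P_{H₂}; and the orthogonal projection onto the closure of ran(T₁) equals P_{H₂} + P_{H₅}. -/
set_option linter.unusedSectionVars false
set_option maxHeartbeats 1000000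

noncomputable section

open ContinuousLinearMap

variable {H : Type*} [NormedAddCommGroup H] [InnerProductSpace ℂ H] [CompleteSpace H]

local notation "⟪" x ", " y "⟫" => @inner ℂ _ _ x y

theorem projOn_apply_eq (K : Submodule ℂ H) (hK : IsClosed (K : Set H)) (x : H) :
    haveI : CompleteSpace K := hK.completeSpace_coe
    projOn K hK x = (K.orthogonalProjectionOnto x : H) := rfl

/-- inner product of an element of `Rᗮ` with an element of the closure of `R` vanishes. -/
theorem inner_orth_closure_zero {R : Submodule ℂ H} {m n : H} (hm : m ∈ Rᗮ)
    (hn : n ∈ R.topologicalClosure) : ⟪m, n⟫ = 0 := by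
  rw [← Submodule.orthogonal_orthogonal_eq_closure] at hn
  exact (Submodule.mem_orthogonal _ _).1 hn m hm

/-- Orthogonal decomposition lemma: if `M, N ≤ K` are mutually orthogonal and the only
element of `K` orthogonal to both `M` and `N` is zero, then the projection onto `K` is the
sum of the projections onto `M` and `N`. -/
theorem projOn_eq_add {M N K : Submodule ℂ H} (hM : IsClosed (M : Set H))
    (hN : IsClosed (N : Set H)) (hK : IsClosed (K : Set H))
    (hMK : M ≤ K) (hNK : N ≤ K)
    (hMN : ∀ m ∈ M, ∀ n ∈ N, ⟪m, n⟫ = 0)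
    (hzero : ∀ x ∈ K, (∀ m ∈ M, ⟪x, m⟫ = 0) → (∀ n ∈ N, ⟪x, n⟫ = 0) → x = 0) :
    projOn K hK = projOn M hM + projOn N hN := by
  haveI := hM.completeSpace_coe
  haveI := hN.completeSpace_coe
  haveI := hK.completeSpace_coe
  ext x
  rw [ContinuousLinearMap.add_apply, projOn_apply_eq, projOn_apply_eq, projOn_apply_eq]
  set k := (K.orthogonalProjectionOnto x : H) with hk
  set m := (M.orthogonalProjectionOnto x : H) with hm
  set n := (N.orthogonalProjectionOnto x : H) with hn
  have hkK : k ∈ K := (K.orthogonalProjectionOnto x).2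
  have hmM : m ∈ M := (M.orthogonalProjectionOnto x).2
  have hnN : n ∈ N := (N.orthogonalProjectionOnto x).2
  have hdK : k - m - n ∈ K := K.sub_mem (K.sub_mem hkK (hMK hmM)) (hNK hnN)
  have key : ∀ w : H, ⟪k - m - n, w⟫ = ⟪x - m, w⟫ - ⟪x - k, w⟫ - ⟪n, w⟫ := by
    intro w
    rw [← inner_sub_left, ← inner_sub_left]
    congr 1
    abel
  have hdM : ∀ w ∈ M, ⟪k - m - n, w⟫ = 0 := by
    intro w hw
    rw [key]
    rw [(by exact Submodule.starProjection_inner_eq_zero (K := M) x w hw : ⟪x - m, w⟫ = 0),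
      (by exact Submodule.starProjection_inner_eq_zero (K := K) x w (hMK hw) : ⟪x - k, w⟫ = 0),
      inner_eq_zero_symm.mpr (hMN w hw n hnN)]
    ring
  have hdN : ∀ w ∈ N, ⟪k - m - n, w⟫ = 0 := by
    intro w hw
    rw [key]
    rw [(by exact Submodule.starProjection_inner_eq_zero (K := K) x w (hNK hw) : ⟪x - k, w⟫ = 0)]
    have h1 : ⟪x - m, w⟫ = ⟪x - n, w⟫ - ⟪m, w⟫ + ⟪n, w⟫ := by
      rw [inner_sub_left, inner_sub_left]; ring
    rw [h1, (by exact Submodule.starProjection_inner_eq_zero (K := N) x w hw : ⟪x - n, w⟫ = 0), hMN m hmM w hw]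
    ring
  have hd : k - m - n = 0 := hzero _ hdK hdM hdN
  have := sub_eq_zero.mp (by rw [← hd]; abel : (k - (m + n)) = 0)
  exact this

/-- A self-adjoint idempotent equals the orthogonal projection onto its range. -/
theorem sa_idem_eq_projOn (P : H →L[ℂ] H) (hPsa : ContinuousLinearMap.adjoint P = P)
    (hP : P * P = P) :
    P = projOn (LinearMap.range (P : H →ₗ[ℂ] H)) (isClosed_range_of_idem P hP) := by
  haveI := (isClosed_range_of_idem P hP).completeSpace_coe
  ext x
  rw [projOn_apply_eq]
  symm
  apply Submodule.eq_starProjection_of_mem_of_inner_eq_zero (LinearMap.mem_range_self _ x)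
  rintro w ⟨y, rfl⟩
  have hPin : ∀ a b : H, ⟪a, P b⟫ = ⟪P a, b⟫ := by
    intro a b
    nth_rewrite 2 [← hPsa]
    exact (adjoint_inner_left P b a).symm
  simp only [ContinuousLinearMap.coe_coe]
  rw [hPin]
  have hPP : ∀ z, P (P z) = P z := fun z => congrFun (congrArg DFunLike.coe hP) z
  have : P (x - P x) = 0 := by rw [map_sub, hPP, sub_self]
  rw [this, inner_zero_left]

/-- For a quasi-projection pair `(P, Q)`, with `T₁ = P(I-Q)`, `H₁ = ran P ⊓ ran Q`,
`H₂ = ran P ⊓ ker Q` and `H₅ = cl ran(PQ(I-P))`: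
`P_{cl ran(PQ)} = P_{H₁} + P_{H₅}`, `P = P_{cl ran(PQ)} + P_{H₂}` and
`P_{cl ran T₁} = P_{H₂} + P_{H₅}`. -/
theorem quasiProjectionPair_proj_decomp_PQ (P Q : H →L[ℂ] H)
    (hPsa : ContinuousLinearMap.adjoint P = P) (hP : P * P = P) (hQ : Q * Q = Q)
    (hPQ : ContinuousLinearMap.adjoint Q = (2 * P - 1) * Q * (2 * P - 1)) :
    projCl (P * Q)
      = projOn (LinearMap.range (P : H →ₗ[ℂ] H) ⊓ LinearMap.range (Q : H →ₗ[ℂ] H))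
          (isClosed_inf (isClosed_range_of_idem P hP) (isClosed_range_of_idem Q hQ))
        + projCl (P * Q * (1 - P)) ∧
    P = projCl (P * Q)
        + projOn (LinearMap.range (P : H →ₗ[ℂ] H) ⊓ LinearMap.ker (Q : H →ₗ[ℂ] H))
            (isClosed_inf (isClosed_range_of_idem P hP)
              (ContinuousLinearMap.isClosed_ker Q)) ∧
    projCl (P * (1 - Q))
      = projOn (LinearMap.range (P : H →ₗ[ℂ] H) ⊓ LinearMap.ker (Q : H →ₗ[ℂ] H))
          (isClosed_inf (isClosed_range_of_idem P hP)
            (ContinuousLinearMap.isClosed_ker Q))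
        + projCl (P * Q * (1 - P)) := by
  -- pointwise operator facts
  have hPP : ∀ z, P (P z) = P z := fun z => congrFun (congrArg DFunLike.coe hP) z
  have hQQ : ∀ z, Q (Q z) = Q z := fun z => congrFun (congrArg DFunLike.coe hQ) z
  set S : H →L[ℂ] H := 2 * P - 1 with hSdef
  have hSapp : ∀ x : H, S x = P x + P x - x := by
    intro x
    simp [hSdef, ContinuousLinearMap.sub_apply, ContinuousLinearMap.mul_apply,
      ContinuousLinearMap.one_apply, two_mul, ContinuousLinearMap.add_apply]
  have hSfix : ∀ x : H, P x = x → S x = x := by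
    intro x hx; rw [hSapp, hx]; abel
  have hPS : ∀ x : H, P (S x) = P x := by
    intro x; rw [hSapp, map_sub, map_add, hPP]; abel
  -- inner product moves
  have hPin : ∀ a b : H, ⟪P a, b⟫ = ⟪a, P b⟫ := by
    intro a b
    nth_rewrite 1 [← hPsa]
    exact adjoint_inner_left P b a
  have hQin : ∀ a b : H, ⟪Q a, b⟫ = ⟪a, S (Q (S b))⟫ := by
    intro a b
    rw [← adjoint_inner_right Q, hPQ]
    simp [hSdef, ContinuousLinearMap.mul_apply, inner_sub_right]
  have hQin' : ∀ a b : H, ⟪a, Q b⟫ = ⟪S (Q (S a)), b⟫ := by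
    intro a b
    rw [← inner_conj_symm, hQin, inner_conj_symm]
  -- membership in range P
  have memP : ∀ x : H, x ∈ LinearMap.range (P : H →ₗ[ℂ] H) ↔ P x = x := by
    intro x
    constructor
    · rintro ⟨y, rfl⟩; exact hPP y
    · intro h; exact ⟨x, h⟩
  -- range inclusions
  have hR1P : (LinearMap.range ((P * Q : H →L[ℂ] H) : H →ₗ[ℂ] H)) ≤ LinearMap.range (P : H →ₗ[ℂ] H) := by
    rintro _ ⟨y, rfl⟩; exact ⟨Q y, rfl⟩
  have hclR1P : (LinearMap.range ((P * Q : H →L[ℂ] H) : H →ₗ[ℂ] H)).topologicalClosure ≤ LinearMap.range (P : H →ₗ[ℂ] H) :=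
    Submodule.topologicalClosure_minimal _ hR1P (isClosed_range_of_idem P hP)
  have hR5R1 : (LinearMap.range ((P * Q * (1 - P) : H →L[ℂ] H) : H →ₗ[ℂ] H)) ≤ LinearMap.range ((P * Q : H →L[ℂ] H) : H →ₗ[ℂ] H) := by
    rintro _ ⟨y, rfl⟩; exact ⟨(1 - P) y, rfl⟩
  have hclR5clR1 : (LinearMap.range ((P * Q * (1 - P) : H →L[ℂ] H) : H →ₗ[ℂ] H)).topologicalClosure ≤
      (LinearMap.range ((P * Q : H →L[ℂ] H) : H →ₗ[ℂ] H)).topologicalClosure :=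
    Submodule.topologicalClosure_mono hR5R1
  have hclR5P : (LinearMap.range ((P * Q * (1 - P) : H →L[ℂ] H) : H →ₗ[ℂ] H)).topologicalClosure ≤ LinearMap.range (P : H →ₗ[ℂ] H) :=
    le_trans hclR5clR1 hclR1P
  have hRTP : (LinearMap.range ((P * (1 - Q) : H →L[ℂ] H) : H →ₗ[ℂ] H)) ≤ LinearMap.range (P : H →ₗ[ℂ] H) := by
    rintro _ ⟨y, rfl⟩; exact ⟨(1 - Q) y, rfl⟩
  have hclRTP : (LinearMap.range ((P * (1 - Q) : H →L[ℂ] H) : H →ₗ[ℂ] H)).topologicalClosure ≤ LinearMap.range (P : H →ₗ[ℂ] H) :=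
    Submodule.topologicalClosure_minimal _ hRTP (isClosed_range_of_idem P hP)
  -- H1 facts
  have memH1 : ∀ x : H, x ∈ LinearMap.range (P : H →ₗ[ℂ] H) ⊓ LinearMap.range (Q : H →ₗ[ℂ] H) ↔ P x = x ∧ Q x = x := by
    intro x
    rw [Submodule.mem_inf, memP]
    constructor
    · rintro ⟨h1, y, rfl⟩; exact ⟨h1, hQQ y⟩
    · rintro ⟨h1, h2⟩; exact ⟨h1, x, h2⟩
  have memH2 : ∀ x : H, x ∈ LinearMap.range (P : H →ₗ[ℂ] H) ⊓ LinearMap.ker (Q : H →ₗ[ℂ] H) ↔ P x = x ∧ Q x = 0 := by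
    intro x
    rw [Submodule.mem_inf, memP, LinearMap.mem_ker, ContinuousLinearMap.coe_coe]
  have hH1R1 : LinearMap.range (P : H →ₗ[ℂ] H) ⊓ LinearMap.range (Q : H →ₗ[ℂ] H) ≤ LinearMap.range ((P * Q : H →L[ℂ] H) : H →ₗ[ℂ] H) := by
    intro x hx
    obtain ⟨h1, h2⟩ := (memH1 x).1 hx
    exact ⟨x, by rw [ContinuousLinearMap.coe_coe, ContinuousLinearMap.mul_apply, h2, h1]⟩
  have hH1clR1 : LinearMap.range (P : H →ₗ[ℂ] H) ⊓ LinearMap.range (Q : H →ₗ[ℂ] H) ≤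
      (LinearMap.range ((P * Q : H →L[ℂ] H) : H →ₗ[ℂ] H)).topologicalClosure :=
    le_trans hH1R1 (Submodule.le_topologicalClosure _)
  have hH2RT : LinearMap.range (P : H →ₗ[ℂ] H) ⊓ LinearMap.ker (Q : H →ₗ[ℂ] H) ≤ LinearMap.range ((P * (1 - Q) : H →L[ℂ] H) : H →ₗ[ℂ] H) := by
    intro x hx
    obtain ⟨h1, h2⟩ := (memH2 x).1 hx
    refine ⟨x, ?_⟩
    rw [ContinuousLinearMap.coe_coe, ContinuousLinearMap.mul_apply, ContinuousLinearMap.sub_apply,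
      ContinuousLinearMap.one_apply, h2, sub_zero, h1]
  have hH2clRT : LinearMap.range (P : H →ₗ[ℂ] H) ⊓ LinearMap.ker (Q : H →ₗ[ℂ] H) ≤
      (LinearMap.range ((P * (1 - Q) : H →L[ℂ] H) : H →ₗ[ℂ] H)).topologicalClosure :=
    le_trans hH2RT (Submodule.le_topologicalClosure _)
  have hH2P : LinearMap.range (P : H →ₗ[ℂ] H) ⊓ LinearMap.ker (Q : H →ₗ[ℂ] H) ≤ LinearMap.range (P : H →ₗ[ℂ] H) := inf_le_left
  have hR5RT : (LinearMap.range ((P * Q * (1 - P) : H →L[ℂ] H) : H →ₗ[ℂ] H)) ≤ LinearMap.range ((P * (1 - Q) : H →L[ℂ] H) : H →ₗ[ℂ] H) := by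
    rintro _ ⟨w, rfl⟩
    refine ⟨P w - w, ?_⟩
    simp only [ContinuousLinearMap.coe_coe, ContinuousLinearMap.mul_apply, ContinuousLinearMap.sub_apply,
      ContinuousLinearMap.one_apply]
    have e1 : P (P w - w) = 0 := by rw [map_sub, hPP, sub_self]
    have e2 : Q (P w - w) = - Q (w - P w) := by rw [← map_neg]; congr 1; abel
    rw [map_sub P (P w - w) (Q (P w - w)), e1, e2, map_neg, zero_sub, neg_neg]
  have hclR5clRT : (LinearMap.range ((P * Q * (1 - P) : H →L[ℂ] H) : H →ₗ[ℂ] H)).topologicalClosure ≤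
      (LinearMap.range ((P * (1 - Q) : H →L[ℂ] H) : H →ₗ[ℂ] H)).topologicalClosure :=
    Submodule.topologicalClosure_mono hR5RT
  -- orthogonality facts
  -- H1 ⟂ ran(PQ(1-P))
  have hO1 : ∀ m, m ∈ LinearMap.range (P : H →ₗ[ℂ] H) ⊓ LinearMap.range (Q : H →ₗ[ℂ] H) →
      m ∈ (LinearMap.range ((P * Q * (1 - P) : H →L[ℂ] H) : H →ₗ[ℂ] H))ᗮ := by
    intro m hm
    obtain ⟨h1, h2⟩ := (memH1 m).1 hm
    rw [Submodule.mem_orthogonal]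
    rintro _ ⟨w, rfl⟩
    simp only [ContinuousLinearMap.coe_coe, ContinuousLinearMap.mul_apply, ContinuousLinearMap.sub_apply,
      ContinuousLinearMap.one_apply]
    rw [hPin, h1, hQin, hSfix m h1, h2, hSfix m h1, inner_sub_left, hPin, h1, sub_self]
  -- H2 ⟂ ran(PQ)
  have hO2 : ∀ y, y ∈ LinearMap.range (P : H →ₗ[ℂ] H) ⊓ LinearMap.ker (Q : H →ₗ[ℂ] H) →
      y ∈ (LinearMap.range ((P * Q : H →L[ℂ] H) : H →ₗ[ℂ] H))ᗮ := by
    intro y hy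
    obtain ⟨h1, h2⟩ := (memH2 y).1 hy
    rw [Submodule.mem_orthogonal]
    rintro _ ⟨u, rfl⟩
    simp only [ContinuousLinearMap.coe_coe, ContinuousLinearMap.mul_apply]
    rw [hPin, h1, hQin, hSfix y h1, h2, map_zero, inner_zero_right]
  -- H2 ⟂ ran(PQ(1-P))
  have hO3 : ∀ y, y ∈ LinearMap.range (P : H →ₗ[ℂ] H) ⊓ LinearMap.ker (Q : H →ₗ[ℂ] H) →
      y ∈ (LinearMap.range ((P * Q * (1 - P) : H →L[ℂ] H) : H →ₗ[ℂ] H))ᗮ := by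
    intro y hy
    obtain ⟨h1, h2⟩ := (memH2 y).1 hy
    rw [Submodule.mem_orthogonal]
    rintro _ ⟨w, rfl⟩
    simp only [ContinuousLinearMap.coe_coe, ContinuousLinearMap.mul_apply]
    rw [hPin, h1, hQin, hSfix y h1, h2, map_zero, inner_zero_right]
  -- H1 ⟂ ran(P(1-Q))
  have hO4 : ∀ m, m ∈ LinearMap.range (P : H →ₗ[ℂ] H) ⊓ LinearMap.range (Q : H →ₗ[ℂ] H) →
      m ∈ (LinearMap.range ((P * (1 - Q) : H →L[ℂ] H) : H →ₗ[ℂ] H))ᗮ := by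
    intro m hm
    obtain ⟨h1, h2⟩ := (memH1 m).1 hm
    rw [Submodule.mem_orthogonal]
    rintro _ ⟨u, rfl⟩
    simp only [ContinuousLinearMap.coe_coe, ContinuousLinearMap.mul_apply, ContinuousLinearMap.sub_apply,
      ContinuousLinearMap.one_apply]
    rw [hPin, h1, inner_sub_left, hQin, hSfix m h1, h2, hSfix m h1, sub_self]
  -- key consequence of orthogonality to closure of ran(PQ(1-P)) :
  -- if P x = x and x ⟂ cl ran(PQ(1-P)) then P (Q x) = Q x
  have hkey5 : ∀ x : H, P x = x →
      (∀ n ∈ (LinearMap.range ((P * Q * (1 - P) : H →L[ℂ] H) : H →ₗ[ℂ] H)).topologicalClosure, ⟪x, n⟫ = 0) →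
      P (Q x) = Q x := by
    intro x hx hn
    have h0 : ∀ w : H, ⟪(P * Q * (1 - P)) w, x⟫ = 0 := by
      intro w
      rw [inner_eq_zero_symm]
      exact hn _ (Submodule.le_topologicalClosure _ (LinearMap.mem_range_self _ w))
    have h1 : ∀ w : H, ⟪w, S (Q x) - P (S (Q x))⟫ = 0 := by
      intro w
      have h := h0 w
      simp only [ContinuousLinearMap.coe_coe, ContinuousLinearMap.mul_apply, ContinuousLinearMap.sub_apply,
        ContinuousLinearMap.one_apply] at h
      rw [hPin, hx, hQin, hSfix x hx, inner_sub_left, hPin] at h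
      rw [inner_sub_right]
      exact h
    have h2 : S (Q x) - P (S (Q x)) = 0 := by
      have := h1 (S (Q x) - P (S (Q x)))
      exact inner_self_eq_zero.mp this
    have h3 : S (Q x) = P (S (Q x)) := by
      rw [sub_eq_zero] at h2; exact h2
    rw [hPS] at h3
    rw [hSapp] at h3
    -- h3 : P (Q x) + P (Q x) - Q x = P (Q x)
    have := h3
    have h4 : P (Q x) - Q x = 0 := by
      have : P (Q x) + P (Q x) - Q x - P (Q x) = 0 := by rw [h3]; abel
      calc P (Q x) - Q x = P (Q x) + P (Q x) - Q x - P (Q x) := by abel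
        _ = 0 := this
    rw [sub_eq_zero] at h4; exact h4
  have hSS : ∀ y : H, S (S y) = y := by
    intro y
    rw [hSapp (S y), hPS, hSapp y]
    abel
  -- zero conditions
  have Z1 : ∀ x ∈ (LinearMap.range ((P * Q : H →L[ℂ] H) : H →ₗ[ℂ] H)).topologicalClosure,
      (∀ m ∈ LinearMap.range (P : H →ₗ[ℂ] H) ⊓ LinearMap.range (Q : H →ₗ[ℂ] H), ⟪x, m⟫ = 0) →
      (∀ n ∈ (LinearMap.range ((P * Q * (1 - P) : H →L[ℂ] H) : H →ₗ[ℂ] H)).topologicalClosure, ⟪x, n⟫ = 0) →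
      x = 0 := by
    intro x hxK hxM hxN
    have hx : P x = x := (memP x).1 (hclR1P hxK)
    have hPQx : P (Q x) = Q x := hkey5 x hx hxN
    have hQxH1 : Q x ∈ LinearMap.range (P : H →ₗ[ℂ] H) ⊓ LinearMap.range (Q : H →ₗ[ℂ] H) :=
      (memH1 _).2 ⟨hPQx, hQQ x⟩
    have h5 : ⟪x, Q x⟫ = 0 := hxM _ hQxH1
    have h6 : ⟪Q x, Q x⟫ = 0 := by
      rw [hQin, hSfix (Q x) hPQx, hQQ, hSfix (Q x) hPQx]
      exact h5
    have hQx0 : Q x = 0 := inner_self_eq_zero.mp h6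
    have hxO : x ∈ (LinearMap.range ((P * Q : H →L[ℂ] H) : H →ₗ[ℂ] H))ᗮ := by
      rw [Submodule.mem_orthogonal]
      rintro _ ⟨u, rfl⟩
      simp only [ContinuousLinearMap.coe_coe, ContinuousLinearMap.mul_apply]
      rw [hPin, hx, hQin, hSfix x hx, hQx0, map_zero, inner_zero_right]
    exact inner_self_eq_zero.mp (inner_orth_closure_zero hxO hxK)
  have Z2 : ∀ x ∈ LinearMap.range (P : H →ₗ[ℂ] H),
      (∀ m ∈ (LinearMap.range ((P * Q : H →L[ℂ] H) : H →ₗ[ℂ] H)).topologicalClosure, ⟪x, m⟫ = 0) →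
      (∀ n ∈ LinearMap.range (P : H →ₗ[ℂ] H) ⊓ LinearMap.ker (Q : H →ₗ[ℂ] H), ⟪x, n⟫ = 0) → x = 0 := by
    intro x hxK hxM hxN
    have hx : P x = x := (memP x).1 hxK
    have h0 : ∀ u : H, ⟪u, S (Q x)⟫ = 0 := by
      intro u
      have h := inner_eq_zero_symm.mp (hxM _ (Submodule.le_topologicalClosure _
        (LinearMap.mem_range_self ((P * Q : H →L[ℂ] H) : H →ₗ[ℂ] H) u)))
      simp only [ContinuousLinearMap.coe_coe, ContinuousLinearMap.mul_apply] at h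
      rw [hPin, hx, hQin, hSfix x hx] at h
      exact h
    have h1 : S (Q x) = 0 := inner_self_eq_zero.mp (h0 (S (Q x)))
    have hQx0 : Q x = 0 := by rw [← hSS (Q x), h1, map_zero]
    have hxH2 : x ∈ LinearMap.range (P : H →ₗ[ℂ] H) ⊓ LinearMap.ker (Q : H →ₗ[ℂ] H) := (memH2 x).2 ⟨hx, hQx0⟩
    exact inner_self_eq_zero.mp (hxN x hxH2)
  have Z3 : ∀ x ∈ (LinearMap.range ((P * (1 - Q) : H →L[ℂ] H) : H →ₗ[ℂ] H)).topologicalClosure,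
      (∀ m ∈ LinearMap.range (P : H →ₗ[ℂ] H) ⊓ LinearMap.ker (Q : H →ₗ[ℂ] H), ⟪x, m⟫ = 0) →
      (∀ n ∈ (LinearMap.range ((P * Q * (1 - P) : H →L[ℂ] H) : H →ₗ[ℂ] H)).topologicalClosure, ⟪x, n⟫ = 0) →
      x = 0 := by
    intro x hxK hxM hxN
    have hx : P x = x := (memP x).1 (hclRTP hxK)
    have hPQx : P (Q x) = Q x := hkey5 x hx hxN
    have hsub : x - Q x ∈ LinearMap.range (P : H →ₗ[ℂ] H) ⊓ LinearMap.ker (Q : H →ₗ[ℂ] H) :=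
      (memH2 _).2 ⟨by rw [map_sub, hx, hPQx], by rw [map_sub, hQQ, sub_self]⟩
    have h5 : ⟪x, x - Q x⟫ = 0 := hxM _ hsub
    have hQxH1 : Q x ∈ LinearMap.range (P : H →ₗ[ℂ] H) ⊓ LinearMap.range (Q : H →ₗ[ℂ] H) :=
      (memH1 _).2 ⟨hPQx, hQQ x⟩
    have h6 : ⟪x, Q x⟫ = 0 := by
      rw [inner_eq_zero_symm]
      exact inner_orth_closure_zero (hO4 _ hQxH1) hxK
    have h7 : ⟪x, x⟫ = 0 := by
      have e : ⟪x, x⟫ = ⟪x, x - Q x⟫ + ⟪x, Q x⟫ := by rw [inner_sub_right]; ring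
      rw [e, h5, h6, add_zero]
    exact inner_self_eq_zero.mp h7
  refine ⟨?_, ?_, ?_⟩
  · exact projOn_eq_add _ _ _ hH1clR1 hclR5clR1
      (fun m hm n hn => inner_orth_closure_zero (hO1 m hm) hn) Z1
  · exact (sa_idem_eq_projOn P hPsa hP).trans (projOn_eq_add _ _ _ hclR1P hH2P
      (fun m hm n hn => inner_eq_zero_symm.mpr (inner_orth_closure_zero (hO2 n hn) hm)) Z2)
  · exact projOn_eq_add _ _ _ hH2clRT hclR5clRT
      (fun m hm n hn => inner_orth_closure_zero (hO3 m hm) hn) Z3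
end
end
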